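/- Let E = EuclideanSpace ℝ (Fin n), ξ ∈ E with ‖ξ‖ = 1, and μ a Borel probability measure on E satisfying the standing integrability assumption whose topological support is not contained in any affine line {p + tξ : t ∈ ℝ} (p ∈ E). Then for β ∈ [0, ∞), the set of minimizers of G_{βξ} over E is nonempty if and only if β < 1. (Euclidean case of Theorem 6.1(a): existence of quantiles exactly for β < 1.) -/

import Mathlib

/-!
For `β < 1` the objective `G_{βξ}` is Lipschitz and grows at least like `(1 - β) ‖p‖`, so it
attains its minimum. For `β > 1` moving any point by `ξ` lowers `G_{βξ}` by at least `β - 1`.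
For `β = 1` the loss is nonnegative while `G_ξ(q + tξ) → 0` as `t → ∞`, so a minimizer `q` has
`G_ξ(q) = 0`; then `ρ_ξ(x, q) = 0` for `μ`-a.e. `x`, which is the equality case of
Cauchy–Schwarz and puts `x` on the closed line `q + ℝξ`, which then contains the support of `μ`.
-/

open MeasureTheory Filter Topology

/-- The data-based geometric quantile loss in Euclidean space:
`ρ_u(x,p) = ‖p − x‖ − ⟪u, p − x⟫`. -/
noncomputable def quantileLoss {n : ℕ} (u x p : EuclideanSpace ℝ (Fin n)) : ℝ :=
  ‖p - x‖ - inner ℝ u (p - x)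

/-- The topological support of a measure: points all of whose neighbourhoods have
positive measure. -/
def measSupport {α : Type*} [TopologicalSpace α] [MeasurableSpace α]
    (μ : Measure α) : Set α :=
  {x | ∀ U ∈ nhds x, μ U ≠ 0}

open scoped RealInnerProductSpace

lemma measSupport_subset_of_ae_mem {α : Type*} [TopologicalSpace α] [MeasurableSpace α]
    {μ : Measure α} {s : Set α} (hs : IsClosed s) (h : ∀ᵐ x ∂μ, x ∈ s) :
    measSupport μ ⊆ s :=
  fun _ hy => by_contra fun hys => hy sᶜ (hs.isOpen_compl.mem_nhds hys) h

section InnerProductSpace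

variable {F : Type*} [NormedAddCommGroup F] [InnerProductSpace ℝ F]

lemma isClosed_setOf_exists_eq_add_smul (p ξ : F) :
    IsClosed {y : F | ∃ t : ℝ, y = p + t • ξ} := by
  have h : {y : F | ∃ t : ℝ, y = p + t • ξ} = (· - p) ⁻¹' (ℝ ∙ ξ) := by
    ext y
    simp only [Set.mem_ofPred_eq, Set.mem_preimage, SetLike.mem_coe,
      Submodule.mem_span_singleton, eq_sub_iff_add_eq', eq_comm]
  rw [h]
  exact (Submodule.closed_of_finiteDimensional _).preimage (continuous_sub_right p)

lemma tendsto_norm_add_smul_sub {ξ : F} (hξ : ‖ξ‖ = 1) (v : F) :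
    Tendsto (fun t : ℝ => ‖v + t • ξ‖ - t) atTop (𝓝 ⟪ξ, v⟫) := by
  set c := ‖v‖ ^ 2 - ⟪ξ, v⟫ ^ 2
  have hinner (t : ℝ) : ⟪ξ, v + t • ξ⟫ = ⟪ξ, v⟫ + t := by
    rw [inner_add_right, real_inner_smul_right, real_inner_self_eq_norm_sq, hξ]; ring
  -- rationalize: `(‖v + tξ‖ - a) (‖v + tξ‖ + a) = c` for `a = ⟪ξ, v⟫ + t`
  have hsq (t : ℝ) : ‖v + t • ξ‖ ^ 2 = (⟪ξ, v⟫ + t) ^ 2 + c := by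
    rw [norm_add_sq_real, norm_smul, real_inner_smul_right, real_inner_comm, hξ,
      Real.norm_eq_abs, mul_one, sq_abs]
    ring
  have hlower (t : ℝ) : ⟪ξ, v⟫ + t ≤ ‖v + t • ξ‖ := by
    simpa only [hinner, hξ, one_mul] using real_inner_le_norm ξ (v + t • ξ)
  have hupper : ∀ᶠ t in atTop, ‖v + t • ξ‖ - (⟪ξ, v⟫ + t) ≤ c / (⟪ξ, v⟫ + t) := by
    filter_upwards [eventually_gt_atTop (-⟪ξ, v⟫)] with t ht
    rw [le_div_iff₀ (by linarith)]
    nlinarith [hsq t, hlower t, norm_nonneg (v + t • ξ)]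
  have hc : Tendsto (fun t : ℝ => c / (⟪ξ, v⟫ + t)) atTop (𝓝 0) :=
    tendsto_const_nhds.div_atTop (tendsto_atTop_add_const_left _ _ tendsto_id)
  have hgap := squeeze_zero' (Eventually.of_forall fun t => sub_nonneg.2 (hlower t)) hupper hc
  have hlim := hgap.add_const ⟪ξ, v⟫
  rw [zero_add] at hlim
  exact hlim.congr fun t => by ring

end InnerProductSpace

section Euclidean

variable {n : ℕ}

lemma quantileLoss_add_le (u x p v : EuclideanSpace ℝ (Fin n)) :
    quantileLoss u x (p + v) ≤ quantileLoss u x p + (‖v‖ - ⟪u, v⟫) := by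
  have hpv : p + v - x = (p - x) + v := by abel
  simp only [quantileLoss, hpv, inner_add_right]
  linarith [norm_add_le (p - x) v]

lemma one_sub_norm_mul_le_quantileLoss (u x p : EuclideanSpace ℝ (Fin n)) :
    (1 - ‖u‖) * ‖p - x‖ ≤ quantileLoss u x p := by
  simp only [quantileLoss]
  linarith [real_inner_le_norm u (p - x)]

lemma quantileLoss_nonneg {u : EuclideanSpace ℝ (Fin n)} (hu : ‖u‖ ≤ 1)
    (x p : EuclideanSpace ℝ (Fin n)) : 0 ≤ quantileLoss u x p :=
  (mul_nonneg (sub_nonneg.2 hu) (norm_nonneg _)).trans (one_sub_norm_mul_le_quantileLoss u x p)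

lemma eq_add_smul_of_quantileLoss_eq_zero {ξ x q : EuclideanSpace ℝ (Fin n)} (hξ : ‖ξ‖ = 1)
    (h : quantileLoss ξ x q = 0) : x = q + (-‖q - x‖) • ξ := by
  have hcs : ⟪ξ, q - x⟫ = ‖ξ‖ * ‖q - x‖ := by
    rw [hξ, one_mul]; exact (sub_eq_zero.1 h).symm
  have hqx : ‖q - x‖ • ξ = q - x := by
    simpa only [hξ, one_smul] using inner_eq_norm_mul_iff_real.1 hcs
  rw [neg_smul, hqx]
  abel

variable {μ : Measure (EuclideanSpace ℝ (Fin n))}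

lemma integrable_id_of_integrable_quantileLoss [IsFiniteMeasure μ]
    {u p : EuclideanSpace ℝ (Fin n)} (hu : ‖u‖ < 1)
    (h : Integrable (fun x => quantileLoss u x p) μ) : Integrable id μ := by
  have hdist : Integrable (fun x => ‖p - x‖) μ := by
    refine (h.const_mul (1 - ‖u‖)⁻¹).mono' (by fun_prop) (Eventually.of_forall fun x => ?_)
    rw [norm_norm, le_inv_mul_iff₀ (by linarith)]
    exact one_sub_norm_mul_le_quantileLoss u x p
  have hsub : Integrable (fun x => p - x) μ := (integrable_norm_iff (by fun_prop)).1 hdist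
  exact ((integrable_const p).sub hsub).congr (Eventually.of_forall fun x => sub_sub_cancel p x)

lemma integrable_quantileLoss [IsFiniteMeasure μ] (hμ : Integrable id μ)
    (u p : EuclideanSpace ℝ (Fin n)) : Integrable (fun x => quantileLoss u x p) μ :=
  ((integrable_const p).sub hμ).norm.sub (((integrable_const p).sub hμ).const_inner u)

/-- The paper's `G_u`; its minimizers are the `u`-quantiles of `μ`. -/
noncomputable def quantileObjective (μ : Measure (EuclideanSpace ℝ (Fin n)))
    (u p : EuclideanSpace ℝ (Fin n)) : ℝ :=
  ∫ x, quantileLoss u x p ∂μ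

variable [IsProbabilityMeasure μ]

lemma quantileObjective_add_le (hμ : Integrable id μ) (u p v : EuclideanSpace ℝ (Fin n)) :
    quantileObjective μ u (p + v) ≤ quantileObjective μ u p + (‖v‖ - ⟪u, v⟫) := by
  have hint := integrable_quantileLoss hμ u p
  calc quantileObjective μ u (p + v)
      ≤ ∫ x, (quantileLoss u x p + (‖v‖ - ⟪u, v⟫)) ∂μ :=
        integral_mono (integrable_quantileLoss hμ u (p + v)) (hint.add (integrable_const _))
          fun x => quantileLoss_add_le u x p v
    _ = quantileObjective μ u p + (‖v‖ - ⟪u, v⟫) := by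
        rw [integral_add hint (integrable_const _), integral_const, probReal_univ, one_smul]
        rfl

lemma quantileObjective_add_lt (hμ : Integrable id μ) {u v : EuclideanSpace ℝ (Fin n)}
    (huv : ‖v‖ < ⟪u, v⟫) (p : EuclideanSpace ℝ (Fin n)) :
    quantileObjective μ u (p + v) < quantileObjective μ u p := by
  linarith [quantileObjective_add_le hμ u p v]

lemma lipschitzWith_quantileObjective (hμ : Integrable id μ) (u : EuclideanSpace ℝ (Fin n)) :
    LipschitzWith (1 + ‖u‖₊) (quantileObjective μ u) := by
  refine LipschitzWith.of_le_add_mul _ fun p q => ?_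
  have hadd := quantileObjective_add_le hμ u q (p - q)
  rw [add_sub_cancel] at hadd
  have hinner : -⟪u, p - q⟫ ≤ ‖u‖ * ‖p - q‖ := by
    linarith [abs_real_inner_le_norm u (p - q), neg_abs_le ⟪u, p - q⟫]
  rw [NNReal.coe_add, NNReal.coe_one, coe_nnnorm, dist_eq_norm]
  linarith

lemma tendsto_quantileObjective_cocompact (hμ : Integrable id μ)
    {u : EuclideanSpace ℝ (Fin n)} (hu : ‖u‖ < 1) :
    Tendsto (quantileObjective μ u) (cocompact _) atTop := by
  have hnorm : Integrable (fun x => ‖x‖) μ := hμ.norm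
  have hlower (p : EuclideanSpace ℝ (Fin n)) :
      (1 - ‖u‖) * (‖p‖ - ∫ x, ‖x‖ ∂μ) ≤ quantileObjective μ u p := by
    have hle (x : EuclideanSpace ℝ (Fin n)) : (1 - ‖u‖) * (‖p‖ - ‖x‖) ≤ quantileLoss u x p :=
      (mul_le_mul_of_nonneg_left (norm_sub_norm_le p x) (by linarith)).trans
        (one_sub_norm_mul_le_quantileLoss u x p)
    calc (1 - ‖u‖) * (‖p‖ - ∫ x, ‖x‖ ∂μ) = ∫ x, (1 - ‖u‖) * (‖p‖ - ‖x‖) ∂μ := by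
          rw [integral_const_mul, integral_sub (integrable_const _) hnorm, integral_const,
            probReal_univ, one_smul]
      _ ≤ quantileObjective μ u p :=
          integral_mono (((integrable_const _).sub hnorm).const_mul _)
            (integrable_quantileLoss hμ u p) hle
  refine tendsto_atTop_mono hlower (Tendsto.const_mul_atTop (by linarith) ?_)
  exact tendsto_atTop_add_const_right _ _ tendsto_norm_cocompact_atTop

lemma exists_forall_quantileObjective_le (hμ : Integrable id μ)
    {u : EuclideanSpace ℝ (Fin n)} (hu : ‖u‖ < 1) :
    ∃ q, ∀ p, quantileObjective μ u q ≤ quantileObjective μ u p :=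
  (lipschitzWith_quantileObjective hμ u).continuous.exists_forall_le
    (tendsto_quantileObjective_cocompact hμ hu)

lemma tendsto_quantileObjective_add_smul (hμ : Integrable id μ)
    {ξ : EuclideanSpace ℝ (Fin n)} (hξ : ‖ξ‖ = 1) (q : EuclideanSpace ℝ (Fin n)) :
    Tendsto (fun t : ℝ => quantileObjective μ ξ (q + t • ξ)) atTop (𝓝 0) := by
  have hloss (x : EuclideanSpace ℝ (Fin n)) (t : ℝ) :
      quantileLoss ξ x (q + t • ξ) = (‖q - x + t • ξ‖ - t) - ⟪ξ, q - x⟫ := by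
    rw [quantileLoss, add_sub_right_comm, inner_add_right, real_inner_smul_right,
      real_inner_self_eq_norm_sq, hξ]
    ring
  -- moving `q` along `ξ` never increases the loss, so `ρ_ξ(·, q)` dominates
  have hbound : ∀ᶠ t : ℝ in atTop, ∀ᵐ x ∂μ, ‖quantileLoss ξ x (q + t • ξ)‖ ≤ quantileLoss ξ x q := by
    filter_upwards [eventually_ge_atTop (0 : ℝ)] with t ht
    refine Eventually.of_forall fun x => ?_
    have hadd := quantileLoss_add_le ξ x q (t • ξ)
    rw [norm_smul, real_inner_smul_right, real_inner_self_eq_norm_sq, hξ,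
      Real.norm_of_nonneg ht] at hadd
    rw [Real.norm_of_nonneg (quantileLoss_nonneg hξ.le x _)]
    linarith
  have hlim : ∀ᵐ x ∂μ, Tendsto (fun t : ℝ => quantileLoss ξ x (q + t • ξ)) atTop (𝓝 0) := by
    refine Eventually.of_forall fun x => ?_
    simpa only [hloss, sub_self] using (tendsto_norm_add_smul_sub hξ (q - x)).sub_const ⟪ξ, q - x⟫
  simpa only [quantileObjective, integral_zero] using tendsto_integral_filter_of_dominated_convergence _
    (Eventually.of_forall fun t => (integrable_quantileLoss hμ ξ _).aestronglyMeasurable)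
    hbound (integrable_quantileLoss hμ ξ q) hlim

lemma ae_quantileLoss_eq_zero_of_forall_le (hμ : Integrable id μ)
    {ξ q : EuclideanSpace ℝ (Fin n)} (hξ : ‖ξ‖ = 1)
    (hq : ∀ p, quantileObjective μ ξ q ≤ quantileObjective μ ξ p) :
    ∀ᵐ x ∂μ, quantileLoss ξ x q = 0 := by
  have hle : quantileObjective μ ξ q ≤ 0 :=
    ge_of_tendsto (tendsto_quantileObjective_add_smul hμ hξ q) (Eventually.of_forall fun t => hq _)
  have hzero : quantileObjective μ ξ q = 0 :=
    hle.antisymm (integral_nonneg fun x => quantileLoss_nonneg hξ.le x q)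
  exact (integral_eq_zero_iff_of_nonneg (fun x => quantileLoss_nonneg hξ.le x q)
    (integrable_quantileLoss hμ ξ q)).1 hzero

end Euclidean

/-- Euclidean case of Theorem 6.1(a): if the support of `μ` is not contained in any
affine line in direction `ξ`, then the set of minimizers of `G_{βξ}` is nonempty iff
`β < 1`. -/
theorem quantile_exists_iff_beta_lt_one
    {n : ℕ} (μ : Measure (EuclideanSpace ℝ (Fin n))) [IsProbabilityMeasure μ]
    (hμint : ∃ (u₀ p₀ : EuclideanSpace ℝ (Fin n)), ‖u₀‖ < 1 ∧
      Integrable (fun x => quantileLoss u₀ x p₀) μ)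
    (ξ : EuclideanSpace ℝ (Fin n)) (hξ : ‖ξ‖ = 1)
    (hsupp : ¬ ∃ p : EuclideanSpace ℝ (Fin n),
      measSupport μ ⊆ {y | ∃ t : ℝ, y = p + t • ξ})
    (β : ℝ) (hβ : 0 ≤ β) :
    ({q : EuclideanSpace ℝ (Fin n) | ∀ p, ∫ x, quantileLoss (β • ξ) x q ∂μ
        ≤ ∫ x, quantileLoss (β • ξ) x p ∂μ}).Nonempty ↔ β < 1 := by
  obtain ⟨u₀, p₀, hu₀, hint⟩ := hμint
  have hμ : Integrable id μ := integrable_id_of_integrable_quantileLoss hu₀ hint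
  have hnorm : ‖β • ξ‖ = β := by rw [norm_smul, hξ, mul_one, Real.norm_of_nonneg hβ]
  have hinner : ⟪β • ξ, ξ⟫ = β := by
    rw [real_inner_smul_left, real_inner_self_eq_norm_sq, hξ, one_pow, mul_one]
  refine ⟨fun ⟨q, hq⟩ => ?_, fun hβ1 => exists_forall_quantileObjective_le hμ (hnorm.trans_lt hβ1)⟩
  by_contra! hβ1
  rcases hβ1.eq_or_lt with rfl | hβ1
  · rw [one_smul] at hq
    have hline : ∀ᵐ x ∂μ, x ∈ {y | ∃ t : ℝ, y = q + t • ξ} :=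
      (ae_quantileLoss_eq_zero_of_forall_le hμ hξ hq).mono fun x hx =>
        ⟨_, eq_add_smul_of_quantileLoss_eq_zero hξ hx⟩
    exact hsupp ⟨q, measSupport_subset_of_ae_mem (isClosed_setOf_exists_eq_add_smul q ξ) hline⟩
  · exact (quantileObjective_add_lt hμ (by rwa [hξ, hinner]) q).not_ge (hq (q + ξ))
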